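/- arXiv:0908.2228 — 3 statements merged into one kernel-verified Lean document; each statement's English description precedes it below -/
import Mathlib

section
/- Let (X_n)_{n∈ω} be a tower of uniform spaces and let A be an adequate family of monotone sequences of uniform pseudometrics. Then the uniformity of the uniform direct limit u-lim X_n is generated by the family of limit pseudometrics { lim d_n : (d_n)_{n∈ω} ∈ A }; that is, the sets { (x,y) : lim d_n(x,y) < ε } for ε > 0 and (d_n) ∈ A form a base of the uniformity of u-lim X_n. -/
open Set Filter Topology

universe u

/-- A tower of uniform spaces on the ambient set `X`: an increasing sequence
`S 0 ⊆ S 1 ⊆ ⋯` of subsets covering `X`, each `S n` carrying a uniformity which is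
the subspace uniformity inherited from `S (n+1)`. -/
structure UniformTower (X : Type u) where
  S : ℕ → Set X
  mono : Monotone S
  iUnion_eq : ⋃ n, S n = Set.univ
  u : (n : ℕ) → UniformSpace (S n)
  compat : ∀ n, u n = UniformSpace.comap (Set.inclusion (mono (Nat.le_succ n))) (u (n + 1))

namespace UniformTower

variable {X : Type u} (T : UniformTower X)

/-- The uniform direct limit: the strongest (finest) uniformity on `X` making all
the identity inclusions `S n → X` uniformly continuous. -/
noncomputable def dirLim : UniformSpace X :=
  sInf {u' : UniformSpace X |
    ∀ n, @UniformContinuous _ _ (T.u n) u' (Subtype.val : T.S n → X)}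

/-- The height `|x| = min {n : x ∈ S n}` of a point of `X`. -/
noncomputable def height (x : X) : ℕ := sInf {n | x ∈ T.S n}

lemma mem_S_height (x : X) : x ∈ T.S (T.height x) := by
  have hx : x ∈ ⋃ n, T.S n := T.iUnion_eq ▸ Set.mem_univ x
  rcases Set.mem_iUnion.mp hx with ⟨n, hn⟩
  exact Nat.sInf_mem ⟨n, show n ∈ {m | x ∈ T.S m} from hn⟩

/-- Given a sequence of pseudometrics `d n` on the stages `S n`, the distance
`d_{|x,y|}(x,y)` where `|x,y| = max (|x|, |y|)`. -/
noncomputable def chainD (d : (n : ℕ) → T.S n → T.S n → ℝ) (x y : X) : ℝ :=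
  d (max (T.height x) (T.height y))
    ⟨x, T.mono (le_max_left _ _) (T.mem_S_height x)⟩
    ⟨y, T.mono (le_max_right _ _) (T.mem_S_height y)⟩

/-- The limit pseudometric `lim d_n` of a sequence of pseudometrics:
`lim d_n (x,y) = inf { Σ_{i=1}^m d_{|x_{i-1},x_i|}(x_{i-1},x_i) : x = x_0, x_1, …, x_m = y }`. -/
noncomputable def limD (d : (n : ℕ) → T.S n → T.S n → ℝ) (x y : X) : ℝ :=
  sInf {r : ℝ | ∃ (m : ℕ) (c : ℕ → X), c 0 = x ∧ c m = y ∧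
    r = ∑ i ∈ Finset.range m, T.chainD d (c i) (c (i + 1))}

/-- A sequence of pseudometrics on the stages of the tower is monotone if
`d n ≤ d (n+1)` on `S n × S n`. -/
def MonotoneSeq (d : (n : ℕ) → T.S n → T.S n → ℝ) : Prop :=
  ∀ n (x y : T.S n),
    d n x y ≤ d (n + 1) (Set.inclusion (T.mono (Nat.le_succ n)) x)
      (Set.inclusion (T.mono (Nat.le_succ n)) y)

end UniformTower

/-- `d` is a pseudometric: it vanishes on the diagonal, is symmetric and satisfies
the triangle inequality. -/
def IsPseudometric {α : Type*} (d : α → α → ℝ) : Prop :=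
  (∀ x, d x x = 0) ∧ (∀ x y, d x y = d y x) ∧ (∀ x y z, d x z ≤ d x y + d y z)

/-- `d` is a uniform pseudometric on the uniform space `(α, u)`:
for every `ε > 0` the set `{d < ε}` is an entourage. -/
def IsUniformPseudometric {α : Type*} (u : UniformSpace α) (d : α → α → ℝ) : Prop :=
  IsPseudometric d ∧ ∀ ε : ℝ, 0 < ε → {p : α × α | d p.1 p.2 < ε} ∈ @uniformity α u

/-!
Each `lim d_n` is a pseudometric bounded on `X_n` by `d_n`, so its balls are entourages of the
direct limit. Conversely, given an entourage `V`, choose symmetric entourages `W k` of the limit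
with `W (k+1) ○ W (k+1) ⊆ W k` and `W 0 ○ W 0 ○ W 0 ⊆ V`, and by adequacy some `(d_n) ∈ A` with
`{d_n < 1} ⊆ W n` on `X_n`. If `lim d_n (x, y) < 1`, some chain from `x` to `y` has sum `< 1`.
Deleting a point at least as high as both of its neighbours does not increase the sum (triangle
inequality for `d_{|q|}` plus monotonicity), so the chain may be taken to be a valley: heights
strictly decrease, then strictly increase. A step lies in `W` at the height of its higher end;
since `W (k+1) ○ W (k+1) ⊆ W k`, a strictly monotone run then stays in `W` at the height of its
lowest point, so `(x, y) ∈ W 0 ○ W 0 ○ W 0 ⊆ V`.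
-/

open scoped Uniformity SetRel Pointwise

section Chains

variable {Y : Type*} (f : Y → Y → ℝ)

def chainSum : List Y → ℝ
  | [] => 0
  | [_] => 0
  | a :: b :: t => f a b + chainSum (b :: t)

def chainSums (x y : Y) : Set ℝ :=
  {r | ∃ L : List Y, L.head? = some x ∧ L.getLast? = some y ∧ chainSum f L = r}

noncomputable def chainInf (x y : Y) : ℝ := sInf (chainSums f x y)

variable {f}

theorem chainSum_nonneg (hf : ∀ a b, 0 ≤ f a b) : ∀ L : List Y, 0 ≤ chainSum f L
  | [] | [_] => le_rfl
  | a :: b :: t => add_nonneg (hf a b) (chainSum_nonneg hf (b :: t))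

theorem chainSum_append_cons : ∀ (l : List Y) (p : Y) (Z : List Y),
    chainSum f (l ++ p :: Z) = chainSum f (l ++ [p]) + chainSum f (p :: Z)
  | [], _, _ => by simp [chainSum]
  | [_], _, _ => by simp [chainSum]
  | a :: b :: t, p, Z => by
    simp only [List.cons_append, chainSum]
    rw [← List.cons_append, chainSum_append_cons (b :: t) p Z, List.cons_append, add_assoc]

theorem chainSum_reverse (hf : ∀ a b, f a b = f b a) :
    ∀ L : List Y, chainSum f L.reverse = chainSum f L
  | [] | [_] => rfl
  | a :: b :: t => by
    rw [List.reverse_cons, List.reverse_cons, List.append_assoc, List.singleton_append,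
      chainSum_append_cons, ← List.reverse_cons, chainSum_reverse hf (b :: t)]
    simp [chainSum, hf a b, add_comm]

theorem chainSum_map_range (c : ℕ → Y) : ∀ m : ℕ,
    chainSum f ((List.range (m + 1)).map c) = ∑ i ∈ Finset.range m, f (c i) (c (i + 1))
  | 0 => rfl
  | m + 1 => by
    have ih := chainSum_map_range (c ∘ Nat.succ) m
    rw [List.range_succ_eq_map, List.map_cons, List.map_map, List.range_succ_eq_map, List.map_cons,
      List.map_map, chainSum, ← List.map_map, ← List.map_cons, ← List.range_succ_eq_map, ih,
      Finset.sum_range_succ' _ m, add_comm]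
    rfl

theorem chainSums_eq_setOf_sum_range (x y : Y) :
    chainSums f x y = {r | ∃ (m : ℕ) (c : ℕ → Y), c 0 = x ∧ c m = y ∧
      r = ∑ i ∈ Finset.range m, f (c i) (c (i + 1))} := by
  ext r
  constructor
  · rintro ⟨L, hx, hy, rfl⟩
    have hne : L ≠ [] := by rintro rfl; simp at hx
    have hL : (List.range (L.length - 1 + 1)).map (fun i => L.getD i x) = L := by
      rw [Nat.sub_add_cancel (List.length_pos_iff.2 hne)]
      exact List.ext_getElem (by simp) fun i _ hi => by simp [hi]
    refine ⟨L.length - 1, fun i => L.getD i x, ?_, ?_, ?_⟩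
    · simp [← List.head?_eq_getElem?, hx]
    · simp [← List.getLast?_eq_getElem?, hy]
    · conv_lhs => rw [← hL]
      exact chainSum_map_range _ _
  · rintro ⟨m, c, hx, hy, rfl⟩
    refine ⟨(List.range (m + 1)).map c, ?_, ?_, chainSum_map_range c m⟩
    · simp [List.range_succ_eq_map, hx]
    · simp [List.range_succ, hy]

theorem mem_chainSums_pair (x y : Y) : f x y ∈ chainSums f x y :=
  ⟨[x, y], rfl, rfl, by simp [chainSum]⟩

theorem add_mem_chainSums {x y z : Y} {r s : ℝ} (hr : r ∈ chainSums f x y)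
    (hs : s ∈ chainSums f y z) : r + s ∈ chainSums f x z := by
  obtain ⟨L₁, hx, hy, rfl⟩ := hr
  obtain ⟨L₂, hy', hz, rfl⟩ := hs
  obtain ⟨l, rfl⟩ := List.getLast?_eq_some_iff.1 hy
  obtain ⟨Z, rfl⟩ : ∃ Z, L₂ = y :: Z := ⟨L₂.tail, List.eq_cons_of_mem_head? hy'⟩
  refine ⟨l ++ y :: Z, ?_, ?_, chainSum_append_cons l y Z⟩
  · cases l <;> simp_all
  · simp_all [List.getLast?_append]

theorem chainSums_comm (hf : ∀ a b, f a b = f b a) (x y : Y) :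
    chainSums f x y = chainSums f y x := by
  have key : ∀ x y : Y, chainSums f x y ⊆ chainSums f y x := by
    rintro x y _ ⟨L, hx, hy, rfl⟩
    exact ⟨L.reverse, by simpa using hy, by simpa using hx, chainSum_reverse hf L⟩
  exact (key x y).antisymm (key y x)

theorem nonneg_of_mem_chainSums (hf : ∀ a b, 0 ≤ f a b) {x y : Y} {r : ℝ}
    (hr : r ∈ chainSums f x y) : 0 ≤ r := by
  obtain ⟨L, -, -, rfl⟩ := hr
  exact chainSum_nonneg hf L

theorem bddBelow_chainSums (hf : ∀ a b, 0 ≤ f a b) (x y : Y) : BddBelow (chainSums f x y) :=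
  ⟨0, fun _ => nonneg_of_mem_chainSums hf⟩

theorem chainInf_le (hf : ∀ a b, 0 ≤ f a b) (x y : Y) : chainInf f x y ≤ f x y :=
  csInf_le (bddBelow_chainSums hf x y) (mem_chainSums_pair x y)

theorem chainInf_nonneg (hf : ∀ a b, 0 ≤ f a b) (x y : Y) : 0 ≤ chainInf f x y :=
  le_csInf ⟨_, mem_chainSums_pair x y⟩ fun _ => nonneg_of_mem_chainSums hf

theorem chainInf_self (hf : ∀ a b, 0 ≤ f a b) (h0 : ∀ a, f a a = 0) (x : Y) :
    chainInf f x x = 0 :=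
  ((chainInf_le hf x x).trans_eq (h0 x)).antisymm (chainInf_nonneg hf x x)

theorem chainInf_comm (hf : ∀ a b, f a b = f b a) (x y : Y) : chainInf f x y = chainInf f y x := by
  rw [chainInf, chainSums_comm hf, chainInf]

theorem chainInf_triangle (hf : ∀ a b, 0 ≤ f a b) (x y z : Y) :
    chainInf f x z ≤ chainInf f x y + chainInf f y z := by
  rw [chainInf, chainInf, chainInf, ← csInf_add ⟨_, mem_chainSums_pair x y⟩
    (bddBelow_chainSums hf x y) ⟨_, mem_chainSums_pair y z⟩ (bddBelow_chainSums hf y z)]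
  refine csInf_le_csInf (bddBelow_chainSums hf x z)
    (Set.add_nonempty.2 ⟨⟨_, mem_chainSums_pair x y⟩, ⟨_, mem_chainSums_pair y z⟩⟩) ?_
  rintro _ ⟨r, hr, s, hs, rfl⟩
  exact add_mem_chainSums hr hs

theorem isChain_lt_of_chainSum_lt (hf : ∀ a b, 0 ≤ f a b) {ε : ℝ} :
    ∀ {L : List Y}, chainSum f L < ε → L.IsChain (fun a b => f a b < ε)
  | [], _ => .nil
  | [_], _ => .singleton _
  | a :: b :: t, h => by
    have := chainSum_nonneg hf (b :: t)
    have := hf a b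
    rw [chainSum] at h
    exact List.isChain_cons_cons.2 ⟨by linarith, isChain_lt_of_chainSum_lt hf (by linarith)⟩

end Chains

section Peaks

variable {Y : Type*} (ht : Y → ℕ)

def NoWeakPeak (L : List Y) : Prop :=
  ∀ l₁ p q r l₂, L = l₁ ++ p :: q :: r :: l₂ → ht p ≤ ht q → ht q < ht r

variable {ht}

theorem NoWeakPeak.of_cons {a : Y} {L : List Y} (h : NoWeakPeak ht (a :: L)) : NoWeakPeak ht L :=
  fun l₁ p q r l₂ hL => h (a :: l₁) p q r l₂ (by rw [hL, List.cons_append])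

theorem exists_noWeakPeak_chainSum_le {f : Y → Y → ℝ}
    (hmerge : ∀ p q r, ht p ≤ ht q → ht r ≤ ht q → f p r ≤ f p q + f q r) (L : List Y) :
    ∃ L', L'.head? = L.head? ∧ L'.getLast? = L.getLast? ∧ chainSum f L' ≤ chainSum f L ∧
      NoWeakPeak ht L' := by
  by_cases hL : NoWeakPeak ht L
  · exact ⟨L, rfl, rfl, le_rfl, hL⟩
  simp only [NoWeakPeak, not_forall, not_lt] at hL
  obtain ⟨l₁, p, q, r, l₂, rfl, hpq, hrq⟩ := hL
  obtain ⟨L', hhead, hlast, hsum, hpeak⟩ :=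
    exists_noWeakPeak_chainSum_le hmerge (l₁ ++ p :: r :: l₂)
  refine ⟨L', ?_, ?_, hsum.trans ?_, hpeak⟩
  · rw [hhead]; cases l₁ <;> rfl
  · simp [hlast, List.getLast?_append]
  · rw [chainSum_append_cons l₁ p (r :: l₂), chainSum_append_cons l₁ p (q :: r :: l₂)]
    simp only [chainSum]
    linarith [hmerge p q r hpq hrq]
termination_by L.length
decreasing_by simp_all

theorem NoWeakPeak.isChain_lt {a b : Y} {t : List Y} (h : NoWeakPeak ht (a :: b :: t))
    (hab : ht a ≤ ht b) : (b :: t).IsChain (fun p q => ht p < ht q) := by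
  induction t generalizing a b with
  | nil => exact .singleton b
  | cons c t ih =>
    have hbc : ht b < ht c := h [] a b c t rfl hab
    exact List.isChain_cons_cons.2 ⟨hbc, ih h.of_cons hbc.le⟩

theorem NoWeakPeak.exists_append {a b : Y} {t : List Y} (h : NoWeakPeak ht (a :: b :: t)) :
    ∃ L₁ L₂ : List Y, L₁ ≠ [] ∧ L₂ ≠ [] ∧ a :: b :: t = L₁ ++ L₂ ∧
      L₁.IsChain (fun p q => ht q < ht p) ∧ L₂.IsChain (fun p q => ht p < ht q) := by
  induction t generalizing a b with
  | nil =>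
    exact ⟨[a], [b], List.cons_ne_nil _ _, List.cons_ne_nil _ _, rfl, .singleton a, .singleton b⟩
  | cons c t ih =>
    by_cases hab : ht a ≤ ht b
    · exact ⟨[a], b :: c :: t, List.cons_ne_nil _ _, List.cons_ne_nil _ _, rfl, .singleton a,
        h.isChain_lt hab⟩
    obtain ⟨L₁, L₂, hL₁, hL₂, heq, hdesc, hasc⟩ := ih h.of_cons
    obtain ⟨L₁, rfl⟩ : ∃ L, L₁ = b :: L := by
      cases L₁ with
      | nil => exact absurd rfl hL₁
      | cons b' L => exact ⟨L, by rw [List.cons_append, List.cons.injEq] at heq; rw [heq.1]⟩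
    exact ⟨a :: b :: L₁, L₂, List.cons_ne_nil _ _, hL₂, by rw [heq]; rfl,
      List.isChain_cons_cons.2 ⟨not_le.1 hab, hdesc⟩, hasc⟩

end Peaks

section Entourages

variable {Y : Type*} {ht : Y → ℕ} {W : ℕ → SetRel Y Y}

theorem antitone_of_comp_subset (hrefl : ∀ k, (W k).IsRefl)
    (hcomp : ∀ k, W (k + 1) ○ W (k + 1) ⊆ W k) : Antitone W :=
  antitone_nat_of_succ_le fun k => (@SetRel.left_subset_comp _ _ _ _ (hrefl _)).trans (hcomp k)

theorem head_getLast_mem_of_isChain_lt (hrefl : ∀ k, (W k).IsRefl)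
    (hcomp : ∀ k, W (k + 1) ○ W (k + 1) ⊆ W k) :
    ∀ (L : List Y) (hL : L ≠ []), L.IsChain (fun p q => ht p < ht q) →
      L.IsChain (fun p q => (p, q) ∈ W (max (ht p) (ht q))) →
      (L.head hL, L.getLast hL) ∈ W (ht (L.head hL))
  | [a], _, _, _ => (hrefl _).refl a
  | a :: b :: t, _, hlt, hstep => by
    obtain ⟨hab, hlt⟩ := List.isChain_cons_cons.1 hlt
    obtain ⟨hstep_ab, hstep⟩ := List.isChain_cons_cons.1 hstep
    have hbz := head_getLast_mem_of_isChain_lt hrefl hcomp (b :: t) (List.cons_ne_nil _ _) hlt hstep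
    rw [max_eq_right hab.le] at hstep_ab
    have hW := antitone_of_comp_subset hrefl hcomp (Nat.succ_le_of_lt hab)
    exact hcomp _ ⟨b, hW hstep_ab, by simpa using hW hbz⟩

theorem head_getLast_mem_comp_comp_of_noWeakPeak (hrefl : ∀ k, (W k).IsRefl)
    (hsymm : ∀ k, (W k).IsSymm) (hcomp : ∀ k, W (k + 1) ○ W (k + 1) ⊆ W k)
    {L : List Y} (hL : L ≠ []) (hpeak : NoWeakPeak ht L)
    (hstep : L.IsChain (fun p q => (p, q) ∈ W (max (ht p) (ht q)))) :
    (L.head hL, L.getLast hL) ∈ W 0 ○ W 0 ○ W 0 := by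
  have hW0 := fun k => antitone_of_comp_subset hrefl hcomp (Nat.zero_le k)
  match L, hL, hpeak, hstep with
  | [a], _, _, _ => exact ⟨a, ⟨a, (hrefl 0).refl a, (hrefl 0).refl a⟩, (hrefl 0).refl a⟩
  | a :: b :: t, _, hpeak, hstep =>
    obtain ⟨L₁, L₂, hL₁, hL₂, heq, hdesc, hasc⟩ := hpeak.exists_append
    simp only [heq] at hstep ⊢
    obtain ⟨hstep₁, hstep₂, hjoin⟩ := List.isChain_append.1 hstep
    have hdesc' : (L₁.reverse).IsChain (fun p q => (p, q) ∈ W (max (ht p) (ht q))) :=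
      List.isChain_reverse.2 (hstep₁.imp fun p q h => by rw [max_comm]; exact (hsymm _).symm _ _ h)
    have h₁ := head_getLast_mem_of_isChain_lt hrefl hcomp L₁.reverse (by simpa using hL₁)
      (List.isChain_reverse.2 hdesc) hdesc'
    have h₂ := head_getLast_mem_of_isChain_lt hrefl hcomp L₂ hL₂ hasc hstep₂
    rw [List.head_reverse, List.getLast_reverse] at h₁
    rw [List.head_append_of_ne_nil hL₁, List.getLast_append_of_ne_nil _ hL₂]
    have hjoin' := hjoin _ (List.getLast?_eq_some_getLast hL₁) _ (List.head?_eq_some_head hL₂)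
    exact ⟨L₂.head hL₂, ⟨L₁.getLast hL₁, hW0 _ ((hsymm _).symm _ _ h₁), hW0 _ hjoin'⟩, hW0 _ h₂⟩

end Entourages

theorem exists_seq_symm_comp_subset {α : Type*} [UniformSpace α] {V : SetRel α α}
    (hV : V ∈ 𝓤 α) :
    ∃ W : ℕ → SetRel α α, (∀ k, W k ∈ 𝓤 α) ∧ (∀ k, (W k).IsSymm) ∧
      (∀ k, W (k + 1) ○ W (k + 1) ⊆ W k) ∧ W 0 ○ W 0 ○ W 0 ⊆ V := by
  obtain ⟨t, htU, htsymm, htV⟩ := comp_comp_symm_mem_uniformity_sets hV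
  choose! g hgU hgsymm hgcomp using fun s (hs : s ∈ 𝓤 α) => comp_symm_mem_uniformity_sets hs
  have hU : ∀ k, g^[k] t ∈ 𝓤 α := fun k => by
    induction k with
    | zero => exact htU
    | succ k ih => rw [Function.iterate_succ_apply']; exact hgU _ ih
  refine ⟨fun k => g^[k] t, hU, fun k => ?_, fun k => ?_, htV⟩
  · cases k with
    | zero => exact htsymm
    | succ k =>
      show SetRel.IsSymm (g^[k + 1] t)
      rw [Function.iterate_succ_apply']
      exact hgsymm _ (hU k)
  · simp only [Function.iterate_succ_apply']
    exact hgcomp _ (hU k)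

theorem IsPseudometric.nonneg {α : Type*} {d : α → α → ℝ} (h : IsPseudometric d) (x y : α) :
    0 ≤ d x y := by
  linarith [h.2.2 x y x, h.1 x, h.2.1 x y]

namespace UniformTower

variable {X : Type u} {T : UniformTower X} {d : (n : ℕ) → T.S n → T.S n → ℝ}

theorem height_le {x : X} {n : ℕ} (h : x ∈ T.S n) : T.height x ≤ n := Nat.sInf_le h

theorem uniformContinuous_val_dirLim (n : ℕ) :
    UniformContinuous[T.u n, T.dirLim] (Subtype.val : T.S n → X) :=
  uniformContinuous_sInf_rng.2 fun _ hv => hv n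

theorem MonotoneSeq.apply_le_apply (hm : T.MonotoneSeq d) {m n : ℕ} (h : m ≤ n) {x y : X}
    (hxm : x ∈ T.S m) (hym : y ∈ T.S m) (hxn : x ∈ T.S n) (hyn : y ∈ T.S n) :
    d m ⟨x, hxm⟩ ⟨y, hym⟩ ≤ d n ⟨x, hxn⟩ ⟨y, hyn⟩ := by
  induction n, h using Nat.le_induction with
  | base => exact le_rfl
  | succ n hmn ih => exact (ih (T.mono hmn hxm) (T.mono hmn hym)).trans (hm n _ _)

theorem chainD_eq {x y : X} {n : ℕ} (h : max (T.height x) (T.height y) = n)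
    (hx : x ∈ T.S n) (hy : y ∈ T.S n) : T.chainD d x y = d n ⟨x, hx⟩ ⟨y, hy⟩ := by
  subst h; rfl

theorem chainD_le (hm : T.MonotoneSeq d) {x y : X} {n : ℕ} (hx : x ∈ T.S n) (hy : y ∈ T.S n) :
    T.chainD d x y ≤ d n ⟨x, hx⟩ ⟨y, hy⟩ :=
  hm.apply_le_apply (max_le (height_le hx) (height_le hy)) _ _ hx hy

theorem chainD_nonneg (hd : ∀ n, IsPseudometric (d n)) (x y : X) : 0 ≤ T.chainD d x y :=
  (hd _).nonneg _ _

theorem chainD_comm (hd : ∀ n, IsPseudometric (d n)) (x y : X) :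
    T.chainD d x y = T.chainD d y x :=
  (chainD_eq (max_comm _ _) _ _).trans ((hd _).2.1 _ _)

theorem chainD_le_add_of_height_le (hd : ∀ n, IsPseudometric (d n)) (hm : T.MonotoneSeq d)
    {x q y : X} (hxq : T.height x ≤ T.height q) (hyq : T.height y ≤ T.height q) :
    T.chainD d x y ≤ T.chainD d x q + T.chainD d q y := by
  have hx := T.mono hxq (T.mem_S_height x)
  have hy := T.mono hyq (T.mem_S_height y)
  rw [chainD_eq (max_eq_right hxq) hx (T.mem_S_height q),
    chainD_eq (max_eq_left hyq) (T.mem_S_height q) hy]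
  exact (chainD_le hm hx hy).trans ((hd _).2.2 _ _ _)

theorem limD_eq_chainInf (x y : X) : T.limD d x y = chainInf (T.chainD d) x y := by
  rw [chainInf, chainSums_eq_setOf_sum_range]
  rfl

theorem limD_lt_mem_uniformity (hd : ∀ n, IsUniformPseudometric (T.u n) (d n))
    (hm : T.MonotoneSeq d) {ε : ℝ} (hε : 0 < ε) :
    {q : X × X | T.limD d q.1 q.2 < ε} ∈ 𝓤[T.dirLim] := by
  have hps n : IsPseudometric (d n) := (hd n).1
  have hnonneg := chainD_nonneg (T := T) hps
  have hbasis := UniformSpace.hasBasis_ofFun (exists_gt (0 : ℝ)) (T.limD d)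
    (fun x => by rw [limD_eq_chainInf, chainInf_self hnonneg fun x => (hps _).1 _])
    (fun x y => by rw [limD_eq_chainInf, limD_eq_chainInf, chainInf_comm (chainD_comm hps)])
    (fun x y z => by simp only [limD_eq_chainInf]; exact chainInf_triangle hnonneg x y z)
    UniformSpace.ofDist_aux
  have hle : T.dirLim ≤ UniformSpace.ofFun _ _ _ _ UniformSpace.ofDist_aux :=
    sInf_le fun n => hbasis.tendsto_right_iff.2 fun ε hε => by
      filter_upwards [(hd n).2 ε hε] with p hp
      rw [limD_eq_chainInf]
      exact ((chainInf_le hnonneg _ _).trans (chainD_le hm p.1.2 p.2.2)).trans_lt hp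
  exact hle (hbasis.mem_of_mem hε)

theorem mem_comp_comp_of_limD_lt_one (hd : ∀ n, IsPseudometric (d n)) (hm : T.MonotoneSeq d)
    {W : ℕ → SetRel X X} (hrefl : ∀ k, (W k).IsRefl) (hsymm : ∀ k, (W k).IsSymm)
    (hcomp : ∀ k, W (k + 1) ○ W (k + 1) ⊆ W k)
    (hdW : ∀ n (p q : T.S n), d n p q < 1 → (p.1, q.1) ∈ W n) {x y : X}
    (hxy : T.limD d x y < 1) : (x, y) ∈ W 0 ○ W 0 ○ W 0 := by
  rw [limD_eq_chainInf] at hxy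
  obtain ⟨_, ⟨L, hx, hy, rfl⟩, hL⟩ := exists_lt_of_csInf_lt ⟨_, mem_chainSums_pair x y⟩ hxy
  obtain ⟨L', hx', hy', hle, hpeak⟩ :=
    exists_noWeakPeak_chainSum_le (fun _ _ _ => chainD_le_add_of_height_le hd hm) L
  have hne : L' ≠ [] := by rintro rfl; simp_all
  have hstep : L'.IsChain (fun p q => (p, q) ∈ W (max (T.height p) (T.height q))) :=
    (isChain_lt_of_chainSum_lt (chainD_nonneg hd) (hle.trans_lt hL)).imp fun p q h => hdW _ _ _ h
  have hx'' : L'.head hne = x :=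
    Option.some_injective _ (by rw [← List.head?_eq_some_head, hx', hx])
  have hy'' : L'.getLast hne = y :=
    Option.some_injective _ (by rw [← List.getLast?_eq_some_getLast, hy', hy])
  simpa only [hx'', hy''] using
    head_getLast_mem_comp_comp_of_noWeakPeak hrefl hsymm hcomp hne hpeak hstep

theorem exists_limD_lt_one_subset {A : Set ((n : ℕ) → T.S n → T.S n → ℝ)}
    (hA : ∀ d ∈ A, (∀ n, IsPseudometric (d n)) ∧ T.MonotoneSeq d)
    (hadeq : ∀ U : (n : ℕ) → Set (T.S n × T.S n), (∀ n, U n ∈ 𝓤[T.u n]) →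
      ∃ d ∈ A, ∀ n, {p : T.S n × T.S n | d n p.1 p.2 < 1} ⊆ U n)
    {V : SetRel X X} (hV : V ∈ 𝓤[T.dirLim]) :
    ∃ d ∈ A, {q : X × X | T.limD d q.1 q.2 < 1} ⊆ V := by
  obtain ⟨W, hWU, hsymm, hcomp, hWV⟩ := @exists_seq_symm_comp_subset _ T.dirLim _ hV
  obtain ⟨d, hdA, hdW⟩ := hadeq (fun n => Prod.map Subtype.val Subtype.val ⁻¹' W n)
    fun n => uniformContinuous_val_dirLim n (hWU n)
  obtain ⟨hps, hm⟩ := hA d hdA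
  exact ⟨d, hdA, fun q hq => hWV <| mem_comp_comp_of_limD_lt_one hps hm
    (fun k => @isRefl_of_mem_uniformity _ T.dirLim _ (hWU k)) hsymm hcomp
    (fun n p q h => hdW n (a := (p, q)) h) hq⟩

end UniformTower

/-- Let `(X_n)` be a tower of uniform spaces and `A` an adequate family of monotone sequences
of uniform pseudometrics (adequate: for every sequence `(U_n)` of entourages `U_n` of `X_n`
there is `(d_n) ∈ A` with `{d_n < 1} ⊆ U_n` for all `n`).  Then the uniformity of the uniform
direct limit `u-lim X_n` is generated by the limit pseudometrics `lim d_n`, `(d_n) ∈ A`: the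
sets `{(x,y) : lim d_n (x,y) < ε}` for `ε > 0` and `(d_n) ∈ A` form a base of the uniformity
of `u-lim X_n`. -/
theorem statement9 {X : Type u} (T : UniformTower X)
    (A : Set ((n : ℕ) → T.S n → T.S n → ℝ))
    (hA : ∀ d ∈ A, (∀ n, IsUniformPseudometric (T.u n) (d n)) ∧ T.MonotoneSeq d)
    (hadeq : ∀ U : (n : ℕ) → Set (T.S n × T.S n),
      (∀ n, U n ∈ @uniformity _ (T.u n)) →
      ∃ d ∈ A, ∀ n, {p : T.S n × T.S n | d n p.1 p.2 < 1} ⊆ U n) :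
    (@uniformity X T.dirLim).HasBasis
      (fun p : ((n : ℕ) → T.S n → T.S n → ℝ) × ℝ => p.1 ∈ A ∧ 0 < p.2)
      (fun p => {q : X × X | T.limD p.1 q.1 q.2 < p.2}) := by
  refine ⟨fun V => ⟨fun hV => ?_, ?_⟩⟩
  · obtain ⟨d, hdA, hdV⟩ :=
      T.exists_limD_lt_one_subset (fun d hd => ⟨fun n => ((hA d hd).1 n).1, (hA d hd).2⟩) hadeq hV
    exact ⟨(d, 1), ⟨hdA, one_pos⟩, hdV⟩
  · rintro ⟨⟨d, ε⟩, ⟨hdA, hε⟩, hdV⟩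
    exact mem_of_superset (T.limD_lt_mem_uniformity (hA d hdA).1 (hA d hdA).2 hε) hdV
end

section
/- Let (X_n)_{n∈ω} be an increasing sequence of topological groups in which each X_n is a topological subgroup of X_{n+1}, each X_n is a SIN-group, and each X_n carries its two-sided uniformity (so that (X_n) is a tower of uniform spaces). Then the uniform direct limit u-lim X_n, with the group operations of X = ⋃_n X_n and the topology induced by the direct limit uniformity, is a topological group (multiplication and inversion are continuous). -/
open Set Filter Topology Pointwise

universe u

/-- The uniform direct limit uniformity of an increasing sequence of uniform subspaces of `G`:
the strongest (finest) uniformity on `G` making all inclusions uniformly continuous. -/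
noncomputable def uDirLim {G : Type u} (S : ℕ → Set G)
    (u : (n : ℕ) → UniformSpace (S n)) : UniformSpace G :=
  sInf {u' : UniformSpace G |
    ∀ n, @UniformContinuous _ _ (u n) u' (Subtype.val : S n → G)}

/-!
The sets `⋃ₙ V₀ V₁ ⋯ Vₙ`, with each `Vₙ` a symmetric neighbourhood of `1` in `Xₙ` normalised by
`Xₙ`, form a base at `1` of `u-lim Xₙ`. They are neighbourhoods because the left uniformity they
generate makes every inclusion `Xₙ → X` uniformly continuous. Conversely, given an entourage `E₀`
of the limit, choose entourages with `Eₙ₊₁ ○ Eₙ₊₁ ⊆ Eₙ` and then `Vₙ` so small that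
`(x, x v) ∈ Eₙ₊₁` for `x ∈ Xₙ`, `v ∈ Vₙ`; every product `v₀ ⋯ vₙ` is then `E₀`-close to `1`.
Since `Vₙ` is normalised by `Xₙ ⊇ V₀ ⋯ Vₙ₋₁`, shrinking every `Vₙ` to some `Wₙ` with
`Wₙ Wₙ ⊆ Vₙ` gives `(⋃ W₀ ⋯ Wₙ)² ⊆ ⋃ V₀ ⋯ Vₙ`: multiplication is continuous at `(1, 1)`.
Translations and inversion are uniformly continuous on each SIN group `Xₙ`, hence on the limit by
its universal property.
-/

open Uniformity
open scoped SetRel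

section DirectLimit

variable {G : Type*} {S : ℕ → Set G} {u : (n : ℕ) → UniformSpace (S n)}

theorem uniformContinuous_val_uDirLim (n : ℕ) :
    UniformContinuous[u n, uDirLim S u] (Subtype.val : S n → G) :=
  uniformContinuous_sInf_rng.2 fun _ hv => hv n

theorem uDirLim_le {v : UniformSpace G}
    (hv : ∀ n, UniformContinuous[u n, v] (Subtype.val : S n → G)) : uDirLim S u ≤ v :=
  sInf_le hv

theorem uniformContinuous_uDirLim_of_comp_val {β : Type*} {v : UniformSpace β} {f : G → β}
    (hf : ∀ n, UniformContinuous[u n, v] (f ∘ Subtype.val : S n → β)) :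
    UniformContinuous[uDirLim S u, v] f :=
  uniformContinuous_iff_le_comap.2 <| uDirLim_le fun n => uniformContinuous_comap' (hf n)

end DirectLimit

section Telescoping

variable {α : Type*} [UniformSpace α]

theorem exists_seq_comp_subset {V : Set (α × α)} (hV : V ∈ 𝓤 α) :
    ∃ E : ℕ → Set (α × α), E 0 = V ∧ (∀ n, E n ∈ 𝓤 α) ∧
      ∀ n, E (n + 1) ○ E (n + 1) ⊆ E n := by
  choose F hF hFcomp using fun s : {s // s ∈ 𝓤 α} => comp_mem_uniformity_sets s.2
  let E : ℕ → {s // s ∈ 𝓤 α} := fun n => Nat.rec ⟨V, hV⟩ (fun _ s => ⟨F s, hF s⟩) n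
  exact ⟨fun n => (E n).1, rfl, fun n => (E n).2, fun n => hFcomp (E n)⟩

theorem mem_of_telescoping_chain {E : ℕ → Set (α × α)} (hE : ∀ n, E n ∈ 𝓤 α)
    (hcomp : ∀ n, E (n + 1) ○ E (n + 1) ⊆ E n) {x : α} {P : ℕ → Set α} (h0 : P 0 ⊆ {x})
    (hstep : ∀ n, ∀ y ∈ P (n + 1), ∃ z ∈ P n, (z, y) ∈ E (n + 1)) {n : ℕ} {y : α}
    (hy : y ∈ P n) : (x, y) ∈ E 0 := by
  suffices key : ∀ n, ∀ z ∈ P n, ∀ y, (z, y) ∈ E n → (x, y) ∈ E 0 from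
    key n y hy y (refl_mem_uniformity (hE n))
  intro n
  induction n with
  | zero => rintro z hz y hzy; rwa [← h0 hz]
  | succ n ih =>
    intro z hz y hzy
    obtain ⟨z', hz', hz'z⟩ := hstep n z hz
    exact ih z' hz' y (hcomp n ⟨z, hz'z, hzy⟩)

end Telescoping

section LeftUniformity

variable {G : Type*} [Group G]

abbrev leftUniformSpaceOfFilter (F : Filter G) (hone : pure 1 ≤ F) (hinv : Tendsto (·⁻¹) F F)
    (hmul : Tendsto (fun p : G × G => p.1 * p.2) (F ×ˢ F) F) : UniformSpace G :=
  .ofCore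
    { uniformity := F.comap fun p => p.2⁻¹ * p.1
      refl := by
        rw [← map_le_iff_le_comap, map_principal]
        refine le_trans (principal_mono.2 ?_) (principal_singleton (1 : G) ▸ hone)
        rintro _ ⟨p, hp, rfl⟩
        simp [SetRel.mem_id.1 hp]
      symm := by
        rw [tendsto_comap_iff]
        convert hinv.comp tendsto_comap using 1
        ext p
        simp
      comp := by
        intro s hs
        obtain ⟨s', hs', hs's⟩ := mem_comap.1 hs
        obtain ⟨a, ha, b, hb, hab⟩ := mem_prod_iff.1 (hmul hs')
        refine mem_of_superset (mem_lift' (preimage_mem_comap (inter_mem ha hb))) ?_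
        rintro ⟨x, y⟩ ⟨z, hxz, hzy⟩
        refine hs's (?_ : y⁻¹ * x ∈ s')
        have := hab (show (y⁻¹ * z, z⁻¹ * x) ∈ a ×ˢ b from ⟨hzy.1, hxz.2⟩)
        simpa [mul_assoc] using this }

theorem nhds_one_leftUniformSpaceOfFilter {F : Filter G} (hone : pure 1 ≤ F)
    (hinv : Tendsto (·⁻¹) F F) (hmul : Tendsto (fun p : G × G => p.1 * p.2) (F ×ˢ F) F) :
    @nhds G (leftUniformSpaceOfFilter F hone hinv hmul).toTopologicalSpace 1 = F := by
  let _ := leftUniformSpaceOfFilter F hone hinv hmul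
  rw [nhds_eq_comap_uniformity]
  change comap (Prod.mk 1) (F.comap _) = F
  have : (fun p : G × G => p.2⁻¹ * p.1) ∘ Prod.mk 1 = Inv.inv := funext fun y => mul_one y⁻¹
  rw [comap_comap, this, Filter.comap_inv]
  exact le_antisymm hinv (inv_le_iff_le_inv.1 hinv)

end LeftUniformity

theorem IsTopologicalGroup.of_continuous_translations {G : Type*} [Group G]
    [TopologicalSpace G]
    (hleft : ∀ g : G, Continuous (g * ·)) (hright : ∀ g : G, Continuous (· * g))
    (hinv : Continuous fun x : G => x⁻¹)
    (hmul : Tendsto (Function.uncurry ((· * ·) : G → G → G)) (𝓝 1 ×ˢ 𝓝 1) (𝓝 1)) :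
    IsTopologicalGroup G := by
  refine .of_nhds_one' hmul (hinv.tendsto' 1 1 inv_one) (fun g => ?_) (fun g => ?_)
  · have h := (Homeomorph.mk (Equiv.mulLeft g) (hleft g) (hleft g⁻¹)).map_nhds_eq 1
    exact (congrArg 𝓝 (mul_one g)).symm.trans h.symm
  · have h := (Homeomorph.mk (Equiv.mulRight g) (hright g) (hright g⁻¹)).map_nhds_eq 1
    exact (congrArg 𝓝 (one_mul g)).symm.trans h.symm

section InvariantNhds

variable {H : Type*} [Group H] {t : TopologicalSpace H} {u : UniformSpace H}

def IsInvariantNhd (t : TopologicalSpace H) (U : Set H) : Prop :=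
  IsOpen[t] U ∧ 1 ∈ U ∧ U⁻¹ = U ∧ ∀ g : H, (fun x => g * x * g⁻¹) '' U = U

theorem IsInvariantNhd.inv_mem {U : Set H} (hU : IsInvariantNhd t U) {x : H} (hx : x ∈ U) :
    x⁻¹ ∈ U :=
  hU.2.2.1 ▸ Set.inv_mem_inv.2 hx

theorem IsInvariantNhd.conj_mem {U : Set H} (hU : IsInvariantNhd t U) (g : H) {x : H}
    (hx : x ∈ U) : g * x * g⁻¹ ∈ U :=
  hU.2.2.2 g ▸ Set.mem_image_of_mem _ hx

theorem hasBasis_uniformity_of_invariant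
    (hSIN : ∀ W ∈ @nhds H t 1, ∃ U ⊆ W, IsInvariantNhd t U)
    (hbasis : 𝓤[u].HasBasis (fun U : Set H => IsOpen[t] U ∧ 1 ∈ U ∧ U⁻¹ = U)
      (fun U => {p : H × H | p.2⁻¹ * p.1 ∈ U ∧ p.1 * p.2⁻¹ ∈ U})) :
    𝓤[u].HasBasis (IsInvariantNhd t) (fun U => {p : H × H | p.2⁻¹ * p.1 ∈ U}) := by
  refine hbasis.to_hasBasis' (fun Y hY => ?_) fun U hU =>
    mem_of_superset (hbasis.mem_of_mem ⟨hU.1, hU.2.1, hU.2.2.1⟩) fun _ hp => hp.1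
  obtain ⟨U, hUY, hU⟩ := hSIN Y (hY.1.mem_nhds hY.2.1)
  refine ⟨U, hU, fun p hp => ⟨hUY hp, hUY ?_⟩⟩
  simpa [mul_assoc] using hU.conj_mem p.2 hp

theorem uniformContinuous_of_invariant
    (hB : 𝓤[u].HasBasis (IsInvariantNhd t) (fun U => {p : H × H | p.2⁻¹ * p.1 ∈ U}))
    {f : H → H}
    (hf : ∀ U, IsInvariantNhd t U → ∀ x y, y⁻¹ * x ∈ U → (f y)⁻¹ * f x ∈ U) :
    UniformContinuous[u, u] f :=
  (hB.uniformContinuous_iff hB).2 fun U hU => ⟨U, hU, hf U hU⟩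

theorem uniformContinuous_mul_left_of_invariant
    (hB : 𝓤[u].HasBasis (IsInvariantNhd t) (fun U => {p : H × H | p.2⁻¹ * p.1 ∈ U}))
    (g : H) : UniformContinuous[u, u] (g * ·) :=
  uniformContinuous_of_invariant hB fun U _ x y h => by simpa [mul_assoc] using h

theorem uniformContinuous_mul_right_of_invariant
    (hB : 𝓤[u].HasBasis (IsInvariantNhd t) (fun U => {p : H × H | p.2⁻¹ * p.1 ∈ U}))
    (g : H) : UniformContinuous[u, u] (· * g) :=
  uniformContinuous_of_invariant hB fun U hU x y h => by
    simpa [mul_assoc] using hU.conj_mem g⁻¹ h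

theorem uniformContinuous_inv_of_invariant
    (hB : 𝓤[u].HasBasis (IsInvariantNhd t) (fun U => {p : H × H | p.2⁻¹ * p.1 ∈ U})) :
    UniformContinuous[u, u] (·⁻¹ : H → H) :=
  uniformContinuous_of_invariant hB fun U hU x y h => by
    simpa [mul_assoc] using hU.conj_mem x (hU.inv_mem h)

theorem mem_uniformity_of_mem_nhds
    (hB : 𝓤[u].HasBasis (IsInvariantNhd t) (fun U => {p : H × H | p.2⁻¹ * p.1 ∈ U}))
    (hSIN : ∀ W ∈ @nhds H t 1, ∃ U ⊆ W, IsInvariantNhd t U) {A : Set H}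
    (hA : A ∈ @nhds H t 1) : {p : H × H | p.2⁻¹ * p.1 ∈ A} ∈ 𝓤[u] := by
  obtain ⟨U, hUA, hU⟩ := hSIN A hA
  exact mem_of_superset (hB.mem_of_mem hU) fun _ hp => hUA hp

end InvariantNhds

section Tower

variable {G : Type*} [Group G] {S : ℕ → Subgroup G}

/-- `partialProd V n = V 0 * ⋯ * V (n - 1)`, with `n` factors. -/
def partialProd (V : ℕ → Set G) : ℕ → Set G
  | 0 => {1}
  | n + 1 => partialProd V n * V n

def seqProd (V : ℕ → Set G) : Set G :=
  ⋃ n, partialProd V n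

theorem one_mem_seqProd (V : ℕ → Set G) : (1 : G) ∈ seqProd V :=
  mem_iUnion.2 ⟨0, rfl⟩

structure IsInvariantSeq (S : ℕ → Subgroup G) (V : ℕ → Set G) : Prop where
  subset : ∀ n, V n ⊆ S n
  one_mem : ∀ n, (1 : G) ∈ V n
  inv_mem : ∀ n, ∀ x ∈ V n, x⁻¹ ∈ V n
  conj_mem : ∀ n, ∀ g ∈ S n, ∀ x ∈ V n, g * x * g⁻¹ ∈ V n

namespace IsInvariantSeq

variable {V W : ℕ → Set G}

theorem partialProd_subset (hS : Monotone S) (hV : IsInvariantSeq S V) :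
    ∀ n, partialProd V n ⊆ S n
  | 0 => by simp [partialProd]
  | n + 1 => by
    rintro _ ⟨x, hx, y, hy, rfl⟩
    exact hS n.le_succ (mul_mem (hV.partialProd_subset hS n hx) (hV.subset n hy))

theorem partialProd_mono (hV : IsInvariantSeq S V) : Monotone (partialProd V) :=
  monotone_nat_of_le_succ fun n x hx => ⟨x, hx, 1, hV.one_mem n, mul_one x⟩

theorem subset_seqProd (hV : IsInvariantSeq S V) (n : ℕ) : V n ⊆ seqProd V := fun x hx =>
  mem_iUnion.2 ⟨n + 1, 1, hV.partialProd_mono (Nat.zero_le n) rfl, x, hx, one_mul x⟩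

theorem inv_mem_partialProd (hS : Monotone S) (hV : IsInvariantSeq S V) :
    ∀ n, ∀ x ∈ partialProd V n, x⁻¹ ∈ partialProd V n
  | 0, x, hx => by simp_all [partialProd]
  | n + 1, _, ⟨x, hx, y, hy, rfl⟩ => by
    have hxS := hV.partialProd_subset hS n hx
    refine ⟨x⁻¹, hV.inv_mem_partialProd hS n x hx, x * y⁻¹ * x⁻¹,
      hV.conj_mem n x hxS _ (hV.inv_mem n y hy), by group⟩

theorem mul_mem_partialProd (hS : Monotone S) (hW : IsInvariantSeq S W)
    (hWV : ∀ n, W n * W n ⊆ V n) :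
    ∀ n, ∀ x ∈ partialProd W n, ∀ x' ∈ partialProd W n, x * x' ∈ partialProd V n
  | 0, x, hx, x', hx' => by simp_all [partialProd]
  | n + 1, _, ⟨x, hx, y, hy, rfl⟩, _, ⟨x', hx', y', hy', rfl⟩ => by
    have hx'S := hW.partialProd_subset hS n hx'
    refine ⟨x * x', mul_mem_partialProd hS hW hWV n x hx x' hx', x'⁻¹ * y * x' * y',
      hWV n ⟨_, ?_, y', hy', rfl⟩, by group⟩
    simpa using hW.conj_mem n x'⁻¹ ((S n).inv_mem hx'S) y hy

theorem inv_mem_seqProd (hS : Monotone S) (hV : IsInvariantSeq S V) {x : G}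
    (hx : x ∈ seqProd V) : x⁻¹ ∈ seqProd V := by
  obtain ⟨n, hn⟩ := mem_iUnion.1 hx
  exact mem_iUnion.2 ⟨n, hV.inv_mem_partialProd hS n x hn⟩

theorem mul_mem_seqProd (hS : Monotone S) (hW : IsInvariantSeq S W)
    (hWV : ∀ n, W n * W n ⊆ V n) {x y : G} (hx : x ∈ seqProd W) (hy : y ∈ seqProd W) :
    x * y ∈ seqProd V := by
  obtain ⟨m, hm⟩ := mem_iUnion.1 hx
  obtain ⟨n, hn⟩ := mem_iUnion.1 hy
  exact mem_iUnion.2 ⟨max m n, mul_mem_partialProd hS hW hWV _ x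
    (hW.partialProd_mono (le_max_left m n) hm) y (hW.partialProd_mono (le_max_right m n) hn)⟩

end IsInvariantSeq

end Tower

section TopologicalTower

variable {G : Type*} [Group G] {S : ℕ → Subgroup G} {t : (n : ℕ) → TopologicalSpace (S n)}

structure IsNhdSeq (t : (n : ℕ) → TopologicalSpace (S n)) (V : ℕ → Set G) : Prop
    extends IsInvariantSeq S V where
  preimage_mem_nhds : ∀ n, ((↑) ⁻¹' V n : Set (S n)) ∈ @nhds _ (t n) 1

theorem isNhdSeq_image {U : (n : ℕ) → Set (S n)} (hU : ∀ n, IsInvariantNhd (t n) (U n)) :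
    IsNhdSeq t fun n => (↑) '' U n where
  subset n := by rintro _ ⟨x, -, rfl⟩; exact x.2
  one_mem n := ⟨1, (hU n).2.1, rfl⟩
  inv_mem n := by rintro _ ⟨x, hx, rfl⟩; exact ⟨x⁻¹, (hU n).inv_mem hx, rfl⟩
  conj_mem n g hg := by
    rintro _ ⟨x, hx, rfl⟩
    exact ⟨⟨g, hg⟩ * x * ⟨g, hg⟩⁻¹, (hU n).conj_mem _ hx, rfl⟩
  preimage_mem_nhds n := by
    rw [Subtype.val_injective.preimage_image]
    exact (hU n).1.mem_nhds (hU n).2.1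

theorem IsNhdSeq.exists_mul_subset (htg : ∀ n, @IsTopologicalGroup (S n) (t n) _)
    (hSIN : ∀ n, ∀ W ∈ @nhds _ (t n) (1 : S n), ∃ U ⊆ W, IsInvariantNhd (t n) U)
    {V : ℕ → Set G} (hV : IsNhdSeq t V) : ∃ W, IsNhdSeq t W ∧ ∀ n, W n * W n ⊆ V n := by
  have key : ∀ n, ∃ U : Set (S n), IsInvariantNhd (t n) U ∧
      ∀ x ∈ U, ∀ y ∈ U, ↑(x * y) ∈ V n := by
    intro n
    let _ := t n
    obtain ⟨A, hA, hA1, hAA⟩ := exists_open_nhds_one_mul_subset (hV.preimage_mem_nhds n)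
    obtain ⟨U, hUA, hU⟩ := hSIN n A (hA.mem_nhds hA1)
    exact ⟨U, hU, fun x hx y hy => hAA (mul_mem_mul (hUA hx) (hUA hy))⟩
  choose U hU hUV using key
  refine ⟨_, isNhdSeq_image hU, fun n => ?_⟩
  rintro _ ⟨_, ⟨x, hx, rfl⟩, _, ⟨y, hy, rfl⟩, rfl⟩
  exact hUV n x hx y hy

variable (t) in
def seqProdFilter : Filter G :=
  ⨅ V : {V : ℕ → Set G // IsNhdSeq t V}, 𝓟 (seqProd V.1)

theorem pure_one_le_seqProdFilter : pure 1 ≤ seqProdFilter t :=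
  le_iInf fun V => (pure_le_principal _).2 (one_mem_seqProd V.1)

theorem tendsto_inv_seqProdFilter (hS : Monotone S) :
    Tendsto (·⁻¹) (seqProdFilter t) (seqProdFilter t) :=
  tendsto_iInf.2 fun V => tendsto_principal.2 <| mem_iInf_of_mem V <|
    fun _ hx => V.2.inv_mem_seqProd hS hx

theorem tendsto_mul_seqProdFilter (hS : Monotone S)
    (htg : ∀ n, @IsTopologicalGroup (S n) (t n) _)
    (hSIN : ∀ n, ∀ W ∈ @nhds _ (t n) (1 : S n), ∃ U ⊆ W, IsInvariantNhd (t n) U) :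
    Tendsto (fun p : G × G => p.1 * p.2) (seqProdFilter t ×ˢ seqProdFilter t)
      (seqProdFilter t) := by
  refine tendsto_iInf.2 fun V => tendsto_principal.2 ?_
  obtain ⟨W, hW, hWV⟩ := V.2.exists_mul_subset htg hSIN
  have hWmem : seqProd W ∈ seqProdFilter t := mem_iInf_of_mem ⟨W, hW⟩ (mem_principal_self _)
  exact mem_of_superset (prod_mem_prod hWmem hWmem) fun p hp =>
    hW.mul_mem_seqProd hS hWV hp.1 hp.2

end TopologicalTower

section DirectLimitOfTower

variable {G : Type*} [Group G] {S : ℕ → Subgroup G} {t : (n : ℕ) → TopologicalSpace (S n)}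
  {u : (n : ℕ) → UniformSpace (S n)}

theorem uniformContinuous_val_leftUniformSpaceOfFilter (hS : Monotone S)
    (htg : ∀ n, @IsTopologicalGroup (S n) (t n) _)
    (hSIN : ∀ n, ∀ W ∈ @nhds _ (t n) (1 : S n), ∃ U ⊆ W, IsInvariantNhd (t n) U)
    (hB : ∀ n, 𝓤[u n].HasBasis (IsInvariantNhd (t n)) fun U => {p | p.2⁻¹ * p.1 ∈ U})
    (n : ℕ) :
    UniformContinuous[u n, leftUniformSpaceOfFilter (seqProdFilter t) pure_one_le_seqProdFilter
      (tendsto_inv_seqProdFilter hS) (tendsto_mul_seqProdFilter hS htg hSIN)]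
      (Subtype.val : S n → G) := by
  refine tendsto_comap_iff.2 <| tendsto_iInf.2 fun V => tendsto_principal.2 ?_
  refine mem_of_superset (mem_uniformity_of_mem_nhds (hB n) (hSIN n)
    (V.2.preimage_mem_nhds n)) fun p hp => V.2.subset_seqProd n ?_
  simpa using hp

theorem exists_isNhdSeq_seqProd_subset_ball (hS : Monotone S)
    (hB : ∀ n, 𝓤[u n].HasBasis (IsInvariantNhd (t n)) fun U => {p | p.2⁻¹ * p.1 ∈ U})
    {v : UniformSpace G} (hv : ∀ n, UniformContinuous[u n, v] (Subtype.val : S n → G))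
    {V : Set (G × G)} (hV : V ∈ 𝓤[v]) :
    ∃ W, IsNhdSeq t W ∧ seqProd W ⊆ UniformSpace.ball 1 V := by
  obtain ⟨E, rfl, hE, hEcomp⟩ := exists_seq_comp_subset hV
  have key : ∀ n, ∃ U : Set (S n), IsInvariantNhd (t n) U ∧
      ∀ x y : S n, y⁻¹ * x ∈ U → ((x : G), (y : G)) ∈ E (n + 1) := fun n =>
    ((hB n).mem_iff.1 (hv n (hE (n + 1)))).imp fun _ hU =>
      ⟨hU.1, fun x y h => @hU.2 (x, y) h⟩
  choose U hU hUE using key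
  refine ⟨_, isNhdSeq_image hU, fun y hy => ?_⟩
  obtain ⟨n, hn⟩ := mem_iUnion.1 hy
  refine mem_of_telescoping_chain hE hEcomp subset_rfl (fun n => ?_) hn
  rintro _ ⟨x, hx, _, ⟨a, ha, rfl⟩, rfl⟩
  have hxS := (isNhdSeq_image hU).partialProd_subset hS n hx
  refine ⟨x, hx, hUE n ⟨x, hxS⟩ (⟨x, hxS⟩ * a) ?_⟩
  simpa using (hU n).inv_mem ha

theorem nhds_one_uDirLim (hS : Monotone S) (htg : ∀ n, @IsTopologicalGroup (S n) (t n) _)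
    (hSIN : ∀ n, ∀ W ∈ @nhds _ (t n) (1 : S n), ∃ U ⊆ W, IsInvariantNhd (t n) U)
    (hB : ∀ n, 𝓤[u n].HasBasis (IsInvariantNhd (t n)) fun U => {p | p.2⁻¹ * p.1 ∈ U}) :
    @nhds G (uDirLim (fun n => (S n : Set G)) u).toTopologicalSpace 1 = seqProdFilter t := by
  refine le_antisymm ?_ fun s hs => ?_
  · exact (nhds_mono <| UniformSpace.toTopologicalSpace_mono <| uDirLim_le <|
      uniformContinuous_val_leftUniformSpaceOfFilter hS htg hSIN hB).trans
      (nhds_one_leftUniformSpaceOfFilter _ _ _).le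
  · let _ := uDirLim (fun n => (S n : Set G)) u
    rw [nhds_eq_comap_uniformity] at hs
    obtain ⟨V, hV, hVs⟩ := mem_comap.1 hs
    obtain ⟨W, hW, hWV⟩ := exists_isNhdSeq_seqProd_subset_ball hS hB
      uniformContinuous_val_uDirLim hV
    exact mem_iInf_of_mem ⟨W, hW⟩ (mem_principal.2 (hWV.trans hVs))

theorem uniformContinuous_inclusion (hS : Monotone S)
    (hcompat : ∀ n, u n = UniformSpace.comap (Subgroup.inclusion (hS n.le_succ)) (u (n + 1)))
    {n m : ℕ} (h : n ≤ m) : UniformContinuous[u n, u m] (Subgroup.inclusion (hS h)) := by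
  induction m, h using Nat.le_induction with
  | base => exact uniformContinuous_id
  | succ m hm ih =>
    have hstep : UniformContinuous[u m, u (m + 1)] (Subgroup.inclusion (hS m.le_succ)) := by
      rw [hcompat m]
      exact uniformContinuous_comap
    exact hstep.comp ih

theorem uniformContinuous_uDirLim_of_eventually (hS : Monotone S)
    (hcompat : ∀ n, u n = UniformSpace.comap (Subgroup.inclusion (hS n.le_succ)) (u (n + 1)))
    {f : G → G} (hf : ∀ᶠ m in atTop, ∃ f' : S m → S m, UniformContinuous[u m, u m] f' ∧
      ∀ x : S m, f x = f' x) :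
    UniformContinuous[uDirLim (fun n => (S n : Set G)) u,
      uDirLim (fun n => (S n : Set G)) u] f :=
  let _ := uDirLim (fun n => (S n : Set G)) u
  uniformContinuous_uDirLim_of_comp_val fun n => by
    obtain ⟨k, hk⟩ := eventually_atTop.1 hf
    obtain ⟨f', hf', hff'⟩ := hk (max n k) (le_max_right n k)
    have hfac : f ∘ (Subtype.val : ↥(S n : Set G) → G) =
        Subtype.val ∘ f' ∘ Subgroup.inclusion (hS (le_max_left n k)) :=
      funext fun x => hff' (Subgroup.inclusion _ x)
    rw [hfac]
    exact (uniformContinuous_val_uDirLim (S := fun n => (S n : Set G)) _).comp <|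
      hf'.comp (uniformContinuous_inclusion hS hcompat (le_max_left n k))

end DirectLimitOfTower

theorem statement10_general {G : Type u} [Group G] (S : ℕ → Subgroup G)
    (mono : Monotone S) (hunion : ∀ x : G, ∃ n, x ∈ S n)
    (t : (n : ℕ) → TopologicalSpace (S n))
    (htg : ∀ n, @IsTopologicalGroup (S n) (t n) _)
    (hSIN : ∀ n, ∀ W ∈ @nhds _ (t n) (1 : S n), ∃ U : Set (S n),
      U ⊆ W ∧ @IsOpen _ (t n) U ∧ (1 : S n) ∈ U ∧ U⁻¹ = U ∧
      ∀ g : S n, (fun x => g * x * g⁻¹) '' U = U)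
    (u : (n : ℕ) → UniformSpace (S n))
    (hbasis : ∀ n, (@uniformity _ (u n)).HasBasis
      (fun U : Set (S n) => @IsOpen _ (t n) U ∧ (1 : S n) ∈ U ∧ U⁻¹ = U)
      (fun U => {p : S n × S n | p.2⁻¹ * p.1 ∈ U ∧ p.1 * p.2⁻¹ ∈ U}))
    (hcompat_u : ∀ n, u n =
      UniformSpace.comap (⇑(Subgroup.inclusion (mono (Nat.le_succ n)))) (u (n + 1))) :
    @IsTopologicalGroup G
      (uDirLim (fun n => (S n : Set G)) u).toTopologicalSpace _ := by
  let _ := uDirLim (fun n => (S n : Set G)) u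
  have hB n := hasBasis_uniformity_of_invariant (hSIN n) (hbasis n)
  have hmem (g : G) : ∀ᶠ m in atTop, g ∈ S m :=
    let ⟨k, hk⟩ := hunion g
    eventually_atTop.2 ⟨k, fun m hm => mono hm hk⟩
  refine .of_continuous_translations (fun g => ?_) (fun g => ?_) ?_ ?_
  · refine (uniformContinuous_uDirLim_of_eventually mono hcompat_u ?_).continuous
    exact (hmem g).mono fun m hg =>
      ⟨_, uniformContinuous_mul_left_of_invariant (hB m) ⟨g, hg⟩, fun _ => rfl⟩
  · refine (uniformContinuous_uDirLim_of_eventually mono hcompat_u ?_).continuous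
    exact (hmem g).mono fun m hg =>
      ⟨_, uniformContinuous_mul_right_of_invariant (hB m) ⟨g, hg⟩, fun _ => rfl⟩
  · refine (uniformContinuous_uDirLim_of_eventually mono hcompat_u ?_).continuous
    exact .of_forall fun m => ⟨_, uniformContinuous_inv_of_invariant (hB m), fun _ => rfl⟩
  · rw [nhds_one_uDirLim mono htg hSIN hB]
    exact tendsto_mul_seqProdFilter mono htg hSIN

/-- Let `(X_n)` be an increasing sequence of subgroups of a group `G` with union `G`, each
carrying a group topology making it a topological subgroup of the next one, each a SIN-group
(a neighborhood base at `1` of open symmetric invariant sets), and each carrying its two-sided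
uniformity (with basic entourages `U^{LR} = {(x,y) : x ∈ yU ∩ Uy}` for symmetric open
neighborhoods `U` of `1`), so that `(X_n)` is a tower of uniform spaces.  Then the uniform
direct limit `u-lim X_n`, i.e. `G` with the topology induced by the direct limit uniformity,
is a topological group. -/
theorem statement10 {G : Type u} [Group G] (S : ℕ → Subgroup G)
    (mono : Monotone S) (hunion : ∀ x : G, ∃ n, x ∈ S n)
    (t : (n : ℕ) → TopologicalSpace (S n))
    (htg : ∀ n, @IsTopologicalGroup (S n) (t n) _)
    (hcompat_t : ∀ n, t n =
      TopologicalSpace.induced (⇑(Subgroup.inclusion (mono (Nat.le_succ n)))) (t (n + 1)))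
    (hSIN : ∀ n, ∀ W ∈ @nhds _ (t n) (1 : S n), ∃ U : Set (S n),
      U ⊆ W ∧ @IsOpen _ (t n) U ∧ (1 : S n) ∈ U ∧ U⁻¹ = U ∧
      ∀ g : S n, (fun x => g * x * g⁻¹) '' U = U)
    (u : (n : ℕ) → UniformSpace (S n))
    (htop : ∀ n, (u n).toTopologicalSpace = t n)
    (hbasis : ∀ n, (@uniformity _ (u n)).HasBasis
      (fun U : Set (S n) => @IsOpen _ (t n) U ∧ (1 : S n) ∈ U ∧ U⁻¹ = U)
      (fun U => {p : S n × S n | p.2⁻¹ * p.1 ∈ U ∧ p.1 * p.2⁻¹ ∈ U}))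
    (hcompat_u : ∀ n, u n =
      UniformSpace.comap (⇑(Subgroup.inclusion (mono (Nat.le_succ n)))) (u (n + 1))) :
    @IsTopologicalGroup G
      (uDirLim (fun n => (S n : Set G)) u).toTopologicalSpace _ :=
  statement10_general S mono hunion t htg hSIN u hbasis hcompat_u
end

section
/- Let (X_n, *_n)_{n∈ω} be a sequence of pointed uniform spaces. The identity map from the small box-product ⊡_{n∈ω} X_n to the uniform direct limit u-lim ⊡_{i≤n} X_i is a homeomorphism, where ⊡_{i≤n} X_i = ∏_{i≤n} X_i is identified with the subspace {(x_i)_{i∈ω} ∈ ⊡_{i∈ω} X_i : x_i = *_i for all i > n} and carries the product uniformity, so that (⊡_{i≤n} X_i)_{n∈ω} is a tower of uniform spaces whose union is ⊡_{n∈ω} X_n. -/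
/-!
Let `w` be a uniformity on `⊡ X` making every stage inclusion uniformly continuous, `E` a
`w`-entourage and `x` a point of stage `m`. Choose `w`-entourages `F 0 = E` with
`F (k+1) ○ F (k+1) ⊆ F k`; uniform continuity on stage `n` gives a box entourage `U n` that
forces `F (n+1)` inside that stage. For `y` close to `x` in the box entourage
`V i = ⋂_{n ≤ max i m} U n i`, walk from `x` to `y` changing one coordinate at a time: the
`k`-th move stays in stage `max k m` and changes only coordinate `k`, so it lies in
`F (k+1)`, and the composite of all moves lies in `F 0 = E`. Hence `w`-neighbourhoods are
small-box neighbourhoods.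
-/

open Set Filter Topology

universe u

/-- The small box-product of a sequence of pointed spaces: the set of all sequences
`(x_i)` with `x_i ≠ *_i` for only finitely many `i`. -/
abbrev SmallBox (X : ℕ → Type u) (pt : (i : ℕ) → X i) : Type u :=
  {f : (i : ℕ) → X i // {i | f i ≠ pt i}.Finite}

/-- The uniformity of the small box-product, inherited from the box uniformity `ubox`
of the full product. -/
noncomputable def smallBoxUniformity (X : ℕ → Type u) (pt : (i : ℕ) → X i)
    (ubox : UniformSpace ((i : ℕ) → X i)) : UniformSpace (SmallBox X pt) :=
  UniformSpace.comap Subtype.val ubox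

/-- The `n`-th stage `⊡_{i ≤ n} X_i = ∏_{i ≤ n} X_i` of the tower, identified with the
subspace `{(x_i) ∈ ⊡_i X_i : x_i = *_i for all i > n}` of the small box-product. -/
def boxStage (X : ℕ → Type u) (pt : (i : ℕ) → X i) (n : ℕ) : Set (SmallBox X pt) :=
  {f | ∀ i, n < i → f.val i = pt i}

/-- The uniformity of the `n`-th stage, the subspace uniformity inherited from the small
box-product; under the identification `⊡_{i ≤ n} X_i = ∏_{i ≤ n} X_i` it is the product
uniformity. -/
noncomputable def boxStageUniformity (X : ℕ → Type u) (pt : (i : ℕ) → X i)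
    (ubox : UniformSpace ((i : ℕ) → X i)) (n : ℕ) :
    UniformSpace (boxStage X pt n) :=
  UniformSpace.comap Subtype.val (smallBoxUniformity X pt ubox)

open Uniformity SetRel

section EntourageSequence

variable {α : Type*} [UniformSpace α]

theorem exists_seq_entourage_comp_subset {E : SetRel α α} (hE : E ∈ 𝓤 α) :
    ∃ F : ℕ → SetRel α α, F 0 = E ∧ (∀ k, F k ∈ 𝓤 α) ∧ ∀ k, F (k + 1) ○ F (k + 1) ⊆ F k := by
  choose! half half_mem half_comp using fun V (hV : V ∈ 𝓤 α) => comp_mem_uniformity_sets hV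
  have hmem : ∀ k, half^[k] E ∈ 𝓤 α := by
    intro k
    induction k with
    | zero => exact hE
    | succ k ih => simpa only [Function.iterate_succ_apply'] using half_mem _ ih
  refine ⟨fun k => half^[k] E, rfl, hmem, fun k => ?_⟩
  simpa only [Function.iterate_succ_apply'] using half_comp _ (hmem k)

variable {F : ℕ → SetRel α α}

theorem antitone_of_comp_subset_s15 (hF : ∀ k, F k ∈ 𝓤 α) (hcomp : ∀ k, F (k + 1) ○ F (k + 1) ⊆ F k) :
    Antitone F :=
  antitone_nat_of_succ_le fun k p hp => hcomp k ⟨p.1, refl_mem_uniformity (hF (k + 1)), hp⟩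

theorem mem_of_chain_of_comp_subset (hF : ∀ k, F k ∈ 𝓤 α)
    (hcomp : ∀ k, F (k + 1) ○ F (k + 1) ⊆ F k) {z : ℕ → α}
    (hz : ∀ k, (z k, z (k + 1)) ∈ F (k + 1)) (M j : ℕ) : (z j, z (j + M)) ∈ F j := by
  induction M generalizing j with
  | zero => exact refl_mem_uniformity (hF j)
  | succ M ih =>
    rw [← Nat.add_assoc, Nat.add_right_comm]
    exact hcomp j ⟨z (j + 1), hz j, ih (j + 1)⟩

end EntourageSequence

def IsBoxUniformity {ι : Type*} {X : ι → Type*} (u : ∀ i, UniformSpace (X i))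
    (ubox : UniformSpace (∀ i, X i)) : Prop :=
  𝓤[ubox].HasBasis (fun U : ∀ i, SetRel (X i) (X i) => ∀ i, U i ∈ 𝓤[u i])
    (fun U => {p | ∀ i, (p.1 i, p.2 i) ∈ U i})

section SmallBox

variable {X : ℕ → Type u} {pt : ∀ i, X i}

theorem boxStage_mono {m n : ℕ} (h : m ≤ n) : boxStage X pt m ⊆ boxStage X pt n :=
  fun _ hx i hi => hx i (lt_of_le_of_lt h hi)

theorem exists_mem_boxStage (x : SmallBox X pt) : ∃ n, x ∈ boxStage X pt n := by
  obtain ⟨n, hn⟩ := x.2.bddAbove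
  exact ⟨n, fun i hi => not_not.1 fun hne => (hn hne).not_gt hi⟩

def boxSplice (x y : SmallBox X pt) (k : ℕ) : SmallBox X pt :=
  ⟨fun i => if i < k then y.1 i else x.1 i,
    (x.2.union y.2).subset fun i hi => by by_cases h : i < k <;> simp_all⟩

theorem boxSplice_zero (x y : SmallBox X pt) : boxSplice x y 0 = x := by
  ext i
  simp [boxSplice]

theorem boxSplice_eq_right {x y : SmallBox X pt} {n : ℕ} (hx : x ∈ boxStage X pt n)
    (hy : y ∈ boxStage X pt n) : boxSplice x y (n + 1) = y := by
  ext i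
  change (if i < n + 1 then y.1 i else x.1 i) = y.1 i
  split_ifs with h
  · rfl
  · rw [hx i (by omega), hy i (by omega)]

theorem boxSplice_mem_boxStage {x : SmallBox X pt} (y : SmallBox X pt) {k n : ℕ}
    (hx : x ∈ boxStage X pt n) (hk : k ≤ n + 1) : boxSplice x y k ∈ boxStage X pt n := by
  intro i hi
  simp [boxSplice, show ¬i < k by omega, hx i hi]

theorem boxSplice_succ_mem {u : ∀ i, UniformSpace (X i)} {U : ∀ i, SetRel (X i) (X i)}
    (hU : ∀ i, U i ∈ 𝓤[u i]) {x y : SmallBox X pt} {k : ℕ} (hk : (x.1 k, y.1 k) ∈ U k) (i : ℕ) :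
    ((boxSplice x y k).1 i, (boxSplice x y (k + 1)).1 i) ∈ U i := by
  change ((if i < k then y.1 i else x.1 i), (if i < k + 1 then y.1 i else x.1 i)) ∈ U i
  rcases lt_trichotomy i k with h | rfl | h
  · rw [if_pos h, if_pos (by omega)]
    exact refl_mem_uniformity (hU i)
  · rwa [if_neg (lt_irrefl i), if_pos (Nat.lt_succ_self i)]
  · rw [if_neg (by omega), if_neg (by omega)]
    exact refl_mem_uniformity (hU i)

end SmallBox

section Tower

variable {X : ℕ → Type u} {pt : ∀ i, X i} {u : ∀ i, UniformSpace (X i)}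
  {ubox : UniformSpace (∀ i, X i)}

theorem exists_box_entourage_of_uniformContinuous_boxStage (hbox : IsBoxUniformity u ubox)
    {w : UniformSpace (SmallBox X pt)} {n : ℕ}
    (hw : UniformContinuous[boxStageUniformity X pt ubox n, w] Subtype.val)
    {E : SetRel (SmallBox X pt) (SmallBox X pt)} (hE : E ∈ 𝓤[w]) :
    ∃ U : ∀ i, SetRel (X i) (X i), (∀ i, U i ∈ 𝓤[u i]) ∧
      ∀ f ∈ boxStage X pt n, ∀ g ∈ boxStage X pt n, (∀ i, (f.1 i, g.1 i) ∈ U i) → (f, g) ∈ E := by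
  obtain ⟨U, hU, hUE⟩ := ((hbox.comap (Prod.map Subtype.val Subtype.val)).comap
    (Prod.map Subtype.val Subtype.val)).mem_iff.1 (hw hE)
  exact ⟨U, hU, fun f hf g hg hfg => hUE (a := (⟨f, hf⟩, ⟨g, hg⟩)) hfg⟩

theorem exists_box_entourage_of_uniformContinuous_tower (hbox : IsBoxUniformity u ubox)
    {w : UniformSpace (SmallBox X pt)}
    (hw : ∀ n, UniformContinuous[boxStageUniformity X pt ubox n, w] Subtype.val)
    {E : SetRel (SmallBox X pt) (SmallBox X pt)} (hE : E ∈ 𝓤[w]) (m : ℕ) :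
    ∃ V : ∀ i, SetRel (X i) (X i), (∀ i, V i ∈ 𝓤[u i]) ∧
      ∀ x ∈ boxStage X pt m, ∀ y : SmallBox X pt, (∀ i, (x.1 i, y.1 i) ∈ V i) → (x, y) ∈ E := by
  obtain ⟨F, rfl, hF, hcomp⟩ := @exists_seq_entourage_comp_subset _ w _ hE
  choose U hU hUF using fun n =>
    exists_box_entourage_of_uniformContinuous_boxStage hbox (hw n) (hF (n + 1))
  refine ⟨fun i => ⋂ n ∈ Iic (max i m), U n i,
    fun i => (biInter_mem (finite_Iic _)).2 fun n _ => hU n i, fun x hx y hxy => ?_⟩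
  obtain ⟨N, hy⟩ := exists_mem_boxStage y
  have hstep : ∀ k, (boxSplice x y k, boxSplice x y (k + 1)) ∈ F (k + 1) := by
    intro k
    have hxk : x ∈ boxStage X pt (max k m) := boxStage_mono (le_max_right k m) hx
    have hxyk : (x.1 k, y.1 k) ∈ U (max k m) k := mem_iInter₂.1 (hxy k) _ (mem_Iic.2 le_rfl)
    exact @antitone_of_comp_subset_s15 _ w _ hF hcomp _ _ (by omega : k + 1 ≤ max k m + 1) _
      (hUF _ _ (boxSplice_mem_boxStage y hxk (by omega)) _
        (boxSplice_mem_boxStage y hxk (by omega)) (boxSplice_succ_mem (hU _) hxyk))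
  have hchain := @mem_of_chain_of_comp_subset _ w _ hF hcomp _ hstep (max m N + 1) 0
  rwa [Nat.zero_add, boxSplice_zero, boxSplice_eq_right (boxStage_mono (le_max_left m N) hx)
    (boxStage_mono (le_max_right m N) hy)] at hchain

theorem smallBoxUniformity_toTopologicalSpace_le (hbox : IsBoxUniformity u ubox)
    {w : UniformSpace (SmallBox X pt)}
    (hw : ∀ n, UniformContinuous[boxStageUniformity X pt ubox n, w] Subtype.val) :
    (smallBoxUniformity X pt ubox).toTopologicalSpace ≤ w.toTopologicalSpace := by
  refine (le_iff_nhds _ _).2 fun x s hs => ?_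
  obtain ⟨E, hE, hEs⟩ := (@UniformSpace.mem_nhds_iff _ w _ _).1 hs
  obtain ⟨m, hx⟩ := exists_mem_boxStage x
  obtain ⟨V, hV, hVE⟩ := exists_box_entourage_of_uniformContinuous_tower hbox hw hE m
  exact (@UniformSpace.mem_nhds_iff _ (smallBoxUniformity X pt ubox) _ _).2
    ⟨_, preimage_mem_comap (hbox.mem_of_mem hV), fun y hy => hEs (hVE x hx y hy)⟩

end Tower

/-- For a sequence of pointed uniform spaces `(X_i, *_i)`, the identity map from the small
box-product `⊡_{i} X_i` to the uniform direct limit `u-lim ⊡_{i ≤ n} X_i` of the tower of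
finite sub-products is a homeomorphism: the two topologies on `⊡_i X_i` coincide.  Here
`ubox` is the box uniformity on `∏_i X_i`, with basic entourages
`{((x_i),(y_i)) : ∀ i, (x_i,y_i) ∈ U_i}` for sequences of entourages `U_i` of `X_i`. -/
theorem statement15 (X : ℕ → Type u) (u : (i : ℕ) → UniformSpace (X i))
    (pt : (i : ℕ) → X i)
    (ubox : UniformSpace ((i : ℕ) → X i))
    (hbox : (@uniformity _ ubox).HasBasis
      (fun U : (i : ℕ) → Set (X i × X i) => ∀ i, U i ∈ @uniformity _ (u i))
      (fun U => {p : ((i : ℕ) → X i) × ((i : ℕ) → X i) | ∀ i, (p.1 i, p.2 i) ∈ U i})) :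
    (sInf {w : UniformSpace (SmallBox X pt) |
        ∀ n, @UniformContinuous _ _ (boxStageUniformity X pt ubox n) w
          (Subtype.val : boxStage X pt n → SmallBox X pt)}).toTopologicalSpace =
      (smallBoxUniformity X pt ubox).toTopologicalSpace := by
  rw [UniformSpace.toTopologicalSpace_sInf]
  refine le_antisymm (iInf₂_le _ fun n => uniformContinuous_comap) ?_
  exact le_iInf₂ fun w hw => smallBoxUniformity_toTopologicalSpace_le hbox hw
end
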